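/- For a finite substitution σ define Kernel(σ) as the intersection of all sets X of variables such that σ↾X ≈ σ. Then for all finite substitutions σ and θ: (1) σ is a regular extension of σ↾Kernel(σ) (in particular σ↾Kernel(σ) ≈ σ); (2) if σ ≼ θ then Kernel(σ) ⊇ Kernel(θ); (3) if σ ≈ θ then Kernel(σ) = Kernel(θ). -/

import Mathlib

/-- A first-order language: function symbols with arities and predicate
symbols with arities.  Variables are natural numbers. -/
structure FOLang where
  Func : Type
  farity : Func → ℕ
  Pred : Type
  parity : Pred → ℕ

/-- The language has at least one constant. -/
def FOLang.HasConst (L : FOLang) : Prop := ∃ f : L.Func, L.farity f = 0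

/-- Terms over a language. -/
inductive FOTerm (L : FOLang) : Type where
  | var : ℕ → FOTerm L
  | func : (f : L.Func) → (Fin (L.farity f) → FOTerm L) → FOTerm L

namespace FOTerm

variable {L : FOLang}

/-- The (finite) set of variables occurring in a term. -/
def vars : FOTerm L → Finset ℕ
  | .var x => {x}
  | .func _ ts => Finset.univ.biUnion fun i => (ts i).vars

/-- Application of a (total) substitution to a term: simultaneously replace
every variable `x` by the term `f x`. -/
def applyT (f : ℕ → FOTerm L) : FOTerm L → FOTerm L
  | .var x => f x
  | .func g ts => .func g fun i => (ts i).applyT f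

end FOTerm

/-- A pre-interpretation: a non-empty universe together with an
interpretation of the function symbols. -/
structure FOStruc (L : FOLang) where
  carrier : Type
  inhab : Nonempty carrier
  funcs : (f : L.Func) → (Fin (L.farity f) → carrier) → carrier

/-- Evaluation of a term under a valuation. -/
def FOTerm.eval {L : FOLang} (M : FOStruc L) (h : ℕ → M.carrier) : FOTerm L → M.carrier
  | .var x => h x
  | .func f ts => M.funcs f fun i => (ts i).eval M h

/-- The set of `M`-instances of a term: values of the term under all
valuations. -/
def InstT {L : FOLang} (M : FOStruc L) (t : FOTerm L) : Set M.carrier :=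
  { a | ∃ h : ℕ → M.carrier, t.eval M h = a }

/-- `M` is a model of the free equality axioms `FEA(L)`. -/
structure IsFEA {L : FOLang} (M : FOStruc L) : Prop where
  inj : ∀ f : L.Func, Function.Injective (M.funcs f)
  disj : ∀ f g : L.Func, f ≠ g → ∀ a b, M.funcs f a ≠ M.funcs g b
  occ : ∀ (x : ℕ) (t : FOTerm L), t ≠ .var x → x ∈ t.vars →
      ∀ h : ℕ → M.carrier, h x ≠ t.eval M h

/-- The domain has at least two elements. -/
def FOStruc.Nontriv {L : FOLang} (M : FOStruc L) : Prop :=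
  ∃ a b : M.carrier, a ≠ b

/-- The difference set `Diff(s,t)`: `InDiff s t (s',t')` means the pair
`(s',t')` belongs to `Diff(s,t)`. -/
inductive InDiff {L : FOLang} : FOTerm L → FOTerm L → FOTerm L × FOTerm L → Prop where
  | var (x : ℕ) : InDiff (.var x) (.var x) (.var x, .var x)
  | varVar {x y : ℕ} : x ≠ y → InDiff (.var x) (.var y) (.var x, .var y)
  | varFunc (x : ℕ) (f : L.Func) (ts : Fin (L.farity f) → FOTerm L) :
      InDiff (.var x) (.func f ts) (.var x, .func f ts)
  | funcVar (f : L.Func) (ss : Fin (L.farity f) → FOTerm L) (y : ℕ) :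
      InDiff (.func f ss) (.var y) (.func f ss, .var y)
  | funcFunc {f g : L.Func} (ss : Fin (L.farity f) → FOTerm L)
      (ts : Fin (L.farity g) → FOTerm L) : f ≠ g →
      InDiff (.func f ss) (.func g ts) (.func f ss, .func g ts)
  | func {f : L.Func} (ss ts : Fin (L.farity f) → FOTerm L) (i : Fin (L.farity f))
      {p : FOTerm L × FOTerm L} :
      InDiff (ss i) (ts i) p → InDiff (.func f ss) (.func f ts) p
/-- An interpretation: a pre-interpretation together with an interpretation
of the predicate symbols. -/
structure FOInterp (L : FOLang) extends FOStruc L where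
  preds : (p : L.Pred) → (Fin (L.parity p) → carrier) → Prop

/-- First-order formulas. -/
inductive FOForm (L : FOLang) : Type where
  | tru : FOForm L
  | fal : FOForm L
  | eq : FOTerm L → FOTerm L → FOForm L
  | atom : (p : L.Pred) → (Fin (L.parity p) → FOTerm L) → FOForm L
  | not : FOForm L → FOForm L
  | and : FOForm L → FOForm L → FOForm L
  | or : FOForm L → FOForm L → FOForm L
  | imp : FOForm L → FOForm L → FOForm L
  | iff : FOForm L → FOForm L → FOForm L
  | ex : ℕ → FOForm L → FOForm L
  | all : ℕ → FOForm L → FOForm L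

namespace FOForm

variable {L : FOLang}

/-- Tarskian satisfaction of a formula in an interpretation under a valuation. -/
def Sat (I : FOInterp L) (h : ℕ → I.carrier) : FOForm L → Prop
  | .tru => True
  | .fal => False
  | .eq s t => s.eval I.toFOStruc h = t.eval I.toFOStruc h
  | .atom p ts => I.preds p fun i => (ts i).eval I.toFOStruc h
  | .not F => ¬ F.Sat I h
  | .and F G => F.Sat I h ∧ G.Sat I h
  | .or F G => F.Sat I h ∨ G.Sat I h
  | .imp F G => F.Sat I h → G.Sat I h
  | .iff F G => F.Sat I h ↔ G.Sat I h
  | .ex x F => ∃ d : I.carrier, F.Sat I (Function.update h x d)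
  | .all x F => ∀ d : I.carrier, F.Sat I (Function.update h x d)

/-- Free variables of a formula. -/
def fv : FOForm L → Finset ℕ
  | .tru => ∅
  | .fal => ∅
  | .eq s t => s.vars ∪ t.vars
  | .atom _ ts => Finset.univ.biUnion fun i => (ts i).vars
  | .not F => F.fv
  | .and F G => F.fv ∪ G.fv
  | .or F G => F.fv ∪ G.fv
  | .imp F G => F.fv ∪ G.fv
  | .iff F G => F.fv ∪ G.fv
  | .ex x F => F.fv.erase x
  | .all x F => F.fv.erase x

end FOForm

/-- The interpretation obtained from a pre-interpretation by interpreting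
every predicate symbol as the empty relation (for formulas without atoms
the choice is irrelevant). -/
def FOStruc.toInterp {L : FOLang} (M : FOStruc L) : FOInterp L :=
  { toFOStruc := M, preds := fun _ _ => False }

/-- Satisfaction of an (equational) formula in a pre-interpretation. -/
def ESat {L : FOLang} (M : FOStruc L) (h : ℕ → M.carrier) (F : FOForm L) : Prop :=
  F.Sat M.toInterp h

/-- The set of solutions of a formula in a pre-interpretation. -/
def SolE {L : FOLang} (M : FOStruc L) (F : FOForm L) : Set (ℕ → M.carrier) :=
  { h | ESat M h F }

/-- EQ-formulas: built from `True`, `False` and equations using `∧` and `∃`. -/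
inductive IsEQ {L : FOLang} : FOForm L → Prop where
  | tru : IsEQ .tru
  | fal : IsEQ .fal
  | eq (s t : FOTerm L) : IsEQ (.eq s t)
  | and {F G : FOForm L} : IsEQ F → IsEQ G → IsEQ (.and F G)
  | ex (x : ℕ) {F : FOForm L} : IsEQ F → IsEQ (.ex x F)

/-- Equational formulas: first-order formulas with no atoms other than
equations. -/
inductive IsEquational {L : FOLang} : FOForm L → Prop where
  | tru : IsEquational .tru
  | fal : IsEquational .fal
  | eq (s t : FOTerm L) : IsEquational (.eq s t)
  | not {F : FOForm L} : IsEquational F → IsEquational (.not F)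
  | and {F G : FOForm L} : IsEquational F → IsEquational G → IsEquational (.and F G)
  | or {F G : FOForm L} : IsEquational F → IsEquational G → IsEquational (.or F G)
  | imp {F G : FOForm L} : IsEquational F → IsEquational G → IsEquational (.imp F G)
  | iff {F G : FOForm L} : IsEquational F → IsEquational G → IsEquational (.iff F G)
  | ex (x : ℕ) {F : FOForm L} : IsEquational F → IsEquational (.ex x F)
  | all (x : ℕ) {F : FOForm L} : IsEquational F → IsEquational (.all x F)

/-- `F ≼ F'` : `F → F'` is true in every model of `FEA(L)`. -/
def EQle {L : FOLang} (F F' : FOForm L) : Prop :=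
  ∀ M : FOStruc L, IsFEA M → ∀ h : ℕ → M.carrier, ESat M h F → ESat M h F'

/-- `F ≈ F'` : `F ↔ F'` is true in every model of `FEA(L)`. -/
def EQequiv {L : FOLang} (F F' : FOForm L) : Prop := EQle F F' ∧ EQle F' F

/-- `F ≺ F'`. -/
def EQlt {L : FOLang} (F F' : FOForm L) : Prop := EQle F F' ∧ ¬ EQequiv F F'

/-- The conjunction `x₁ = s₁ ∧ … ∧ xₙ = sₙ`. -/
def conjOf {L : FOLang} : List (ℕ × FOTerm L) → FOForm L
  | [] => .tru
  | [p] => .eq (.var p.1) p.2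
  | p :: rest => .and (.eq (.var p.1) p.2) (conjOf rest)

/-- The formula `(∃ z₁) … (∃ z_k) F`. -/
def exOf {L : FOLang} (zs : List ℕ) (F : FOForm L) : FOForm L :=
  zs.foldr .ex F

/-- The disjunction `F₁ ∨ … ∨ Fₙ`. -/
def disjOf {L : FOLang} : List (FOForm L) → FOForm L
  | [] => .fal
  | [F] => F
  | F :: rest => .or F (disjOf rest)

/-- A formula is in solved form if it is `True`, `False`, or of the shape
`∃ z₁ … ∃ z_k (x₁ = s₁ ∧ … ∧ xₙ = sₙ)` where the `xᵢ` and `z_j` are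
pairwise distinct, no `xᵢ` occurs in any right-hand side, every `z_j`
occurs in the conjunction, and no `sᵢ` is one of the `z_j`. -/
def SolvedForm {L : FOLang} (F : FOForm L) : Prop :=
  F = .tru ∨ F = .fal ∨
    ∃ (zs : List ℕ) (eqs : List (ℕ × FOTerm L)),
      eqs ≠ [] ∧
      F = exOf zs (conjOf eqs) ∧
      (eqs.map Prod.fst ++ zs).Nodup ∧
      (∀ p ∈ eqs, ∀ q ∈ eqs, p.1 ∉ q.2.vars) ∧
      (∀ z ∈ zs, ∃ p ∈ eqs, z ∈ p.2.vars) ∧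
      (∀ z ∈ zs, ∀ p ∈ eqs, p.2 ≠ .var z)

/-- The projection of an EQ-formula onto a finite set of variables:
existentially quantify the free variables not in `X`; the projection of
`False` is `False`. -/
def projE {L : FOLang} (E : FOForm L) (X : Finset ℕ) : FOForm L :=
  match E with
  | .fal => .fal
  | E => exOf ((E.fv \ X).sort (· ≤ ·)) E

/-- The universal closure of a formula. -/
def univClosure {L : FOLang} (F : FOForm L) : FOForm L :=
  (F.fv.sort (· ≤ ·)).foldr .all F

/-- A formula is valid if it is true in every interpretation (under every
valuation). -/
def FOValid {L : FOLang} (F : FOForm L) : Prop :=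
  ∀ (I : FOInterp L) (h : ℕ → I.carrier), F.Sat I h

/-- An EQ-formula is consistent if it has a solution in some model of the
free equality axioms. -/
def EQConsistent {L : FOLang} (E : FOForm L) : Prop :=
  ∃ M : FOStruc L, IsFEA M ∧ ∃ h : ℕ → M.carrier, ESat M h E
/-- Ground terms: terms with no variables. -/
def GroundTerm (L : FOLang) : Type := { t : FOTerm L // t.vars = ∅ }

/-- The Herbrand pre-interpretation: its domain is the set of ground terms
and function symbols are interpreted formally. -/
def Herbrand (L : FOLang) (hc : L.HasConst) : FOStruc L where
  carrier := GroundTerm L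
  inhab := by
    obtain ⟨f, hf⟩ := hc
    refine ⟨⟨.func f (fun i => Fin.elim0 (Fin.cast hf i)), ?_⟩⟩
    ext x
    simp only [FOTerm.vars, Finset.mem_biUnion, Finset.mem_univ, true_and,
      Finset.notMem_empty, iff_false, not_exists]
    intro i
    exact Fin.elim0 (Fin.cast hf i)
  funcs := fun f ts => ⟨.func f (fun i => (ts i).1), by
    ext x
    simp only [FOTerm.vars, Finset.mem_biUnion, Finset.mem_univ, true_and,
      Finset.notMem_empty, iff_false, not_exists]
    intro i hx
    rw [(ts i).2] at hx
    exact Finset.notMem_empty x hx⟩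

/-- The language obtained by adding a countably infinite set of new
constants. -/
def addConsts (L : FOLang) : FOLang where
  Func := L.Func ⊕ ℕ
  farity := Sum.elim L.farity fun _ => 0
  Pred := L.Pred
  parity := L.parity

/-- The canonical embedding of terms into the extended language. -/
def FOTerm.lift {L : FOLang} : FOTerm L → FOTerm (addConsts L)
  | .var x => .var x
  | .func f ts => .func (Sum.inl f) fun i => (ts i).lift

/-- The canonical embedding of formulas into the extended language. -/
def FOForm.lift {L : FOLang} : FOForm L → FOForm (addConsts L)
  | .tru => .tru
  | .fal => .fal
  | .eq s t => .eq s.lift t.lift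
  | .atom p ts => .atom p fun i => (ts i).lift
  | .not F => .not F.lift
  | .and F G => .and F.lift G.lift
  | .or F G => .or F.lift G.lift
  | .imp F G => .imp F.lift G.lift
  | .iff F G => .iff F.lift G.lift
  | .ex x F => .ex x F.lift
  | .all x F => .all x F.lift
/-- A finite substitution: a finite set of variables (its domain) together
with an assignment of terms to variables which is the identity outside the
domain. -/
structure FinSubst (L : FOLang) where
  dom : Finset ℕ
  map : ℕ → FOTerm L
  outside : ∀ x ∉ dom, map x = .var x

namespace FinSubst

variable {L : FOLang}

/-- `Range(σ)`: the set of variables occurring in the terms `σ x`, `x ∈ Dom(σ)`. -/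
def range (σ : FinSubst L) : Finset ℕ :=
  σ.dom.biUnion fun x => (σ.map x).vars

/-- `θ` is an extension of `σ`. -/
def Extends (θ σ : FinSubst L) : Prop :=
  σ.dom ⊆ θ.dom ∧ ∀ x ∈ σ.dom, θ.map x = σ.map x

/-- `θ` is a regular extension of `σ`: it extends `σ` and maps
`Dom(θ) \ Dom(σ)` injectively into the variables not in `Range(σ)`. -/
def RegExt (θ σ : FinSubst L) : Prop :=
  Extends θ σ ∧
  (∀ x ∈ θ.dom, x ∉ σ.dom → ∃ y : ℕ, y ∉ σ.range ∧ θ.map x = .var y) ∧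
  Set.InjOn θ.map ↑(θ.dom \ σ.dom)

/-- The set of `M`-instances of a substitution. -/
def Inst {L : FOLang} (M : FOStruc L) (σ : FinSubst L) : Set (ℕ → M.carrier) :=
  { h | ∃ g : ℕ → M.carrier, ∀ x ∈ σ.dom, h x = (σ.map x).eval M g }

open Classical in
/-- The restriction of `σ` to `Dom(σ) ∩ X`. -/
noncomputable def restrict (σ : FinSubst L) (X : Set ℕ) : FinSubst L where
  dom := σ.dom.filter fun x => x ∈ X
  map := fun x => if x ∈ σ.dom ∧ x ∈ X then σ.map x else .var x
  outside := fun x hx => if_neg fun h => hx (Finset.mem_filter.2 ⟨h.1, h.2⟩)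

/-- The composition `σθ`, defined on `Dom(σ)` by `x ↦ (σ x)θ`. -/
def comp (σ θ : FinSubst L) : FinSubst L where
  dom := σ.dom
  map := fun x => if x ∈ σ.dom then (σ.map x).applyT θ.map else .var x
  outside := fun _ hx => if_neg hx

/-- `σ ≼ θ` : `θ` is more general than `σ`. -/
def Le (σ θ : FinSubst L) : Prop :=
  ∃ σ' θ' τ : FinSubst L,
    RegExt σ' σ ∧ RegExt θ' θ ∧ σ'.dom = θ'.dom ∧
    θ'.range ⊆ τ.dom ∧ σ' = θ'.comp τ

/-- `σ ≈ θ`. -/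
def Equiv (σ θ : FinSubst L) : Prop := Le σ θ ∧ Le θ σ

/-- A permutation: a substitution mapping its domain injectively to
variables. -/
def IsPerm (τ : FinSubst L) : Prop :=
  (∀ x ∈ τ.dom, ∃ y : ℕ, τ.map x = .var y) ∧ Set.InjOn τ.map ↑τ.dom

/-- The empty substitution. -/
def empty (L : FOLang) : FinSubst L where
  dom := ∅
  map := fun x => .var x
  outside := fun _ _ => rfl

/-- The kernel of a substitution: the intersection of all sets `X` of
variables such that `σ↾X ≈ σ`. -/
def kernel (σ : FinSubst L) : Set ℕ :=
  ⋂₀ { X : Set ℕ | Equiv (σ.restrict X) σ }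

end FinSubst

noncomputable section

theorem exists_notin_finset (s : Finset ℕ) : ∃ n : ℕ, n ∉ s :=
  ⟨s.sup id + 1, fun h => by
    have := Finset.le_sup (f := id) h
    simp only [id] at this
    omega⟩

/-- The first variable not belonging to a given finite set of variables. -/
def freshVar (s : Finset ℕ) : ℕ := Nat.find (exists_notin_finset s)

/-- Insert a binding into a substitution. -/
def FinSubst.insertB {L : FOLang} (σ : FinSubst L) (x : ℕ) (t : FOTerm L) :
    FinSubst L where
  dom := insert x σ.dom
  map := Function.update σ.map x t
  outside := by
    intro z hz
    have hzx : z ≠ x := fun h => hz (h ▸ Finset.mem_insert_self x σ.dom)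
    have hzd : z ∉ σ.dom := fun h => hz (Finset.mem_insert_of_mem h)
    rw [Function.update_of_ne hzx]
    exact σ.outside z hzd

/-- One step of the regular-extension procedure: extend the substitution
with a binding for `x` (to itself if possible, otherwise to the first
variable not occurring in the range). -/
def regStep {L : FOLang} (acc : FinSubst L) (x : ℕ) : FinSubst L :=
  if x ∈ acc.dom then acc
  else acc.insertB x (.var (if x ∈ acc.range then freshVar acc.range else x))

/-- Restrict `σ` to the free variables of `F` and extend the result
regularly to a substitution whose domain is exactly `fv F`. -/
def FinSubst.extendFV {L : FOLang} (σ : FinSubst L) (F : FOForm L) : FinSubst L :=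
  (F.fv.sort (· ≤ ·)).foldl regStep (σ.restrict ↑F.fv)

/-- Capture-avoiding simultaneous substitution on formulas (bound variables
are renamed as needed). -/
def FOForm.applyF {L : FOLang} (f : ℕ → FOTerm L) : FOForm L → FOForm L
  | .tru => .tru
  | .fal => .fal
  | .eq s t => .eq (s.applyT f) (t.applyT f)
  | .atom p ts => .atom p fun i => (ts i).applyT f
  | .not F => .not (F.applyF f)
  | .and F G => .and (F.applyF f) (G.applyF f)
  | .or F G => .or (F.applyF f) (G.applyF f)
  | .imp F G => .imp (F.applyF f) (G.applyF f)
  | .iff F G => .iff (F.applyF f) (G.applyF f)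
  | .ex x G =>
      let R : Finset ℕ := (G.fv.erase x).biUnion fun z => (f z).vars
      let y : ℕ := if x ∈ R then freshVar R else x
      .ex y (G.applyF (Function.update f x (.var y)))
  | .all x G =>
      let R : Finset ℕ := (G.fv.erase x).biUnion fun z => (f z).vars
      let y : ℕ := if x ∈ R then freshVar R else x
      .all y (G.applyF (Function.update f x (.var y)))

/-- The application `Fσ` of a finite substitution to a formula: restrict
`σ` to the free variables of `F`, extend regularly to all of `fv F`, and
substitute capture-avoidingly. -/
def FOForm.applyS {L : FOLang} (σ : FinSubst L) (F : FOForm L) : FOForm L :=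
  F.applyF (σ.extendFV F).map

end
/-- The set of finite substitutions together with an added bottom element
`⊥` (represented by `none`): the extended preorder. -/
def LeBot {L : FOLang} : Option (FinSubst L) → Option (FinSubst L) → Prop
  | none, _ => True
  | some _, none => False
  | some σ, some θ => FinSubst.Le σ θ

/-- The induced equivalence on `Subst⊥`. -/
def EquivBot {L : FOLang} (a b : Option (FinSubst L)) : Prop :=
  LeBot a b ∧ LeBot b a

/-- The quotient of `Subst⊥` by `≈`. -/
def SubstQuot (L : FOLang) : Type := Quot (EquivBot (L := L))

/-- The induced partial order on the quotient `Subst⊥/≈`. -/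
def SubstQuotLe {L : FOLang} (a b : SubstQuot L) : Prop :=
  ∃ s t : Option (FinSubst L), Quot.mk _ s = a ∧ Quot.mk _ t = b ∧ LeBot s t

/-- EQ-formulas as a subtype. -/
def EQSub (L : FOLang) : Type := { F : FOForm L // IsEQ F }

/-- The quotient of the set of EQ-formulas by `≈`. -/
def EQQuot (L : FOLang) : Type :=
  Quot (fun a b : EQSub L => EQequiv a.1 b.1)

/-- The induced partial order on the quotient of EQ-formulas. -/
def EQQuotLe {L : FOLang} (a b : EQQuot L) : Prop :=
  ∃ E E' : EQSub L, Quot.mk _ E = a ∧ Quot.mk _ E' = b ∧ EQle E.1 E'.1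

/-- The substitution `{x₁↦s₁, …, xₙ↦sₙ, y₁↦y₁, …, y_k↦y_k}` associated
with a solved form with equations `eqs` and parameters `params`. -/
theorem lookup_eq_none_of_not_mem {L : FOLang} (x : ℕ) :
    ∀ eqs : List (ℕ × FOTerm L), x ∉ eqs.map Prod.fst → eqs.lookup x = none := by
  intro eqs
  induction eqs with
  | nil => intro _; rfl
  | cons p rest ih =>
    intro hx1
    have hp : p.1 ≠ x := by
      intro h
      exact hx1 (by simp [h])
    have hr : x ∉ rest.map Prod.fst := fun h => hx1 (by simp [h])
    have hxp : (x == p.1) = false := beq_eq_false_iff_ne.mpr fun h => hp h.symm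
    simp only [List.lookup, hxp]
    exact ih hr

def solvedSubst {L : FOLang} (eqs : List (ℕ × FOTerm L)) (params : Finset ℕ) :
    FinSubst L where
  dom := (eqs.map Prod.fst).toFinset ∪ params
  map := fun x => (eqs.lookup x).getD (.var x)
  outside := by
    intro x hx
    have hx1 : x ∉ eqs.map Prod.fst := fun h =>
      hx (Finset.mem_union_left _ (List.mem_toFinset.2 h))
    simp [lookup_eq_none_of_not_mem x eqs hx1]
section KernelAux

variable {L : FOLang}

theorem FOTerm.applyT_idvar (t : FOTerm L) : t.applyT (fun x => .var x) = t := by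
  induction t with
  | var x => rfl
  | func f ts ih =>
    simp only [FOTerm.applyT]
    exact congrArg _ (funext ih)

theorem FOTerm.mem_vars_applyT {f : ℕ → FOTerm L} {t : FOTerm L} {v : ℕ} :
    v ∈ (t.applyT f).vars ↔ ∃ u ∈ t.vars, v ∈ (f u).vars := by
  induction t with
  | var x => simp [FOTerm.applyT, FOTerm.vars]
  | func g ts ih =>
    simp only [FOTerm.applyT, FOTerm.vars, Finset.mem_biUnion, Finset.mem_univ, true_and]
    constructor
    · rintro ⟨i, hi⟩
      obtain ⟨u, hu, hv⟩ := (ih i).1 hi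
      exact ⟨u, ⟨i, hu⟩, hv⟩
    · rintro ⟨u, ⟨i, hu⟩, hv⟩
      exact ⟨i, (ih i).2 ⟨u, hu, hv⟩⟩

theorem FOTerm.applyT_eq_var {f : ℕ → FOTerm L} {t : FOTerm L} {v : ℕ}
    (h : t.applyT f = .var v) : ∃ u, t = .var u ∧ f u = .var v := by
  cases t with
  | var x => exact ⟨x, rfl, h⟩
  | func g ts => simp [FOTerm.applyT] at h

namespace FinSubst

theorem ext' {σ θ : FinSubst L} (hd : σ.dom = θ.dom) (hm : σ.map = θ.map) : σ = θ := by
  cases σ; cases θ; simp_all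

theorem mem_range' {σ : FinSubst L} {y : ℕ} :
    y ∈ σ.range ↔ ∃ x ∈ σ.dom, y ∈ (σ.map x).vars := by
  simp [range]

theorem mem_restrict_dom {σ : FinSubst L} {X : Set ℕ} {x : ℕ} :
    x ∈ (σ.restrict X).dom ↔ x ∈ σ.dom ∧ x ∈ X := by
  classical
  simp [restrict]

theorem restrict_map_of_mem {σ : FinSubst L} {X : Set ℕ} {x : ℕ}
    (h : x ∈ σ.dom ∧ x ∈ X) : (σ.restrict X).map x = σ.map x := by
  classical
  simp [restrict, h]

/-- `x` can be dropped from `σ`: `σ x` is a variable not occurring in any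
`σ z`, `z ≠ x`. -/
def Droppable (σ : FinSubst L) (x : ℕ) : Prop :=
  ∃ y, σ.map x = .var y ∧ ∀ z ∈ σ.dom, z ≠ x → y ∉ (σ.map z).vars

theorem regExt_refl (σ : FinSubst L) : RegExt σ σ := by
  refine ⟨⟨Finset.Subset.refl _, fun _ _ => rfl⟩, fun x hx hx' => absurd hx hx', ?_⟩
  simp [Set.injOn_empty]

def idOn (s : Finset ℕ) : FinSubst L := ⟨s, fun x => .var x, fun _ _ => rfl⟩

theorem comp_idOn (θ : FinSubst L) (s : Finset ℕ) : θ.comp (idOn s) = θ := by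
  refine ext' rfl (funext fun x => ?_)
  simp only [comp, idOn]
  split
  · exact FOTerm.applyT_idvar _
  · exact (θ.outside x ‹_›).symm

theorem le_le_of_regExt {σ θ : FinSubst L} (h : RegExt θ σ) : Le σ θ ∧ Le θ σ :=
  ⟨⟨θ, θ, idOn θ.range, h, regExt_refl θ, rfl, Finset.Subset.refl _, (comp_idOn θ _).symm⟩,
   ⟨θ, θ, idOn θ.range, regExt_refl θ, h, rfl, Finset.Subset.refl _, (comp_idOn θ _).symm⟩⟩

/-- The concrete kernel. -/
def K0 (σ : FinSubst L) : Set ℕ := {x | x ∈ σ.dom ∧ ¬ Droppable σ x}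

theorem regExt_restrict_K0 (σ : FinSubst L) : RegExt σ (σ.restrict (K0 σ)) := by
  have hmem : ∀ x, x ∈ (σ.restrict (K0 σ)).dom ↔ x ∈ σ.dom ∧ ¬ Droppable σ x := by
    intro x
    rw [mem_restrict_dom]
    constructor
    · rintro ⟨h1, h2⟩; exact ⟨h1, h2.2⟩
    · rintro ⟨h1, h2⟩; exact ⟨h1, h1, h2⟩
  refine ⟨⟨fun x hx => ((hmem x).1 hx).1, fun x hx => ?_⟩, fun x hx hx' => ?_, ?_⟩
  · rw [restrict_map_of_mem]
    rw [mem_restrict_dom] at hx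
    exact hx
  · -- x ∈ σ.dom, x ∉ restricted dom : droppable
    have hd : Droppable σ x := by
      by_contra h
      exact hx' ((hmem x).2 ⟨hx, h⟩)
    obtain ⟨y, hxy, hy⟩ := hd
    refine ⟨y, ?_, hxy⟩
    rw [mem_range']
    rintro ⟨z, hz, hyz⟩
    have hz' := (hmem z).1 hz
    have hzx : z ≠ x := by
      rintro rfl
      exact hz'.2 ⟨y, hxy, hy⟩
    rw [restrict_map_of_mem (X := K0 σ) ⟨hz'.1, show z ∈ K0 σ from ⟨hz'.1, hz'.2⟩⟩] at hyz
    exact hy z hz'.1 hzx hyz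
  · intro a ha b hb hab
    simp only [Finset.coe_sdiff, Set.mem_diff, Finset.mem_coe] at ha hb
    have hda : Droppable σ a := by
      by_contra h; exact ha.2 ((hmem a).2 ⟨ha.1, h⟩)
    have hdb : Droppable σ b := by
      by_contra h; exact hb.2 ((hmem b).2 ⟨hb.1, h⟩)
    obtain ⟨ya, hya, hfa⟩ := hda
    obtain ⟨yb, hyb, hfb⟩ := hdb
    by_contra hne
    have hyy : ya = yb := by
      rw [hya, hyb] at hab
      exact FOTerm.var.inj hab
    refine hfa b hb.1 (fun h => hne h.symm) ?_
    rw [hyb, hyy]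
    simp [FOTerm.vars]

theorem droppable_of_le {ρ θ : FinSubst L} (h : Le ρ θ) {x : ℕ} (hx : x ∈ θ.dom)
    (hρ : x ∉ ρ.dom ∨ Droppable ρ x) : Droppable θ x := by
  obtain ⟨ρ', θ', τ, hρ', hθ', hdom, _, heq⟩ := h
  have hxθ' : x ∈ θ'.dom := hθ'.1.1 hx
  have hmapρ' : ∀ z ∈ θ.dom, ρ'.map z = (θ.map z).applyT τ.map := by
    intro z hz
    have hzθ' : z ∈ θ'.dom := hθ'.1.1 hz
    rw [heq]
    simp only [comp, hzθ', if_pos, hθ'.1.2 z hz]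
  -- produce the fresh variable v together with its freshness property
  have key : ∃ v, ρ'.map x = .var v ∧
      ((x ∉ ρ.dom ∧ v ∉ ρ.range) ∨ (x ∈ ρ.dom ∧ ρ.map x = .var v ∧
        ∀ z ∈ ρ.dom, z ≠ x → v ∉ (ρ.map z).vars)) := by
    by_cases hxρ : x ∈ ρ.dom
    · obtain ⟨y, hxy, hy⟩ := hρ.resolve_left (fun h => h hxρ)
      exact ⟨y, by rw [hρ'.1.2 x hxρ, hxy], Or.inr ⟨hxρ, hxy, hy⟩⟩
    · obtain ⟨y, hy, hxy⟩ := hρ'.2.1 x (hdom ▸ hxθ') hxρ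
      exact ⟨y, hxy, Or.inl ⟨hxρ, hy⟩⟩
  obtain ⟨v, hv0, hfresh⟩ := key
  have hv : (θ.map x).applyT τ.map = .var v := by rw [← hmapρ' x hx]; exact hv0
  obtain ⟨u, hu, huv⟩ := FOTerm.applyT_eq_var hv
  refine ⟨u, hu, fun z hz hzx hmem => ?_⟩
  -- v occurs in ρ'.map z
  have hvz : v ∈ (ρ'.map z).vars := by
    rw [hmapρ' z hz, FOTerm.mem_vars_applyT]
    exact ⟨u, hmem, by simp [huv, FOTerm.vars]⟩
  by_cases hzρ : z ∈ ρ.dom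
  · rw [hρ'.1.2 z hzρ] at hvz
    rcases hfresh with ⟨_, hvr⟩ | ⟨_, _, hf⟩
    · exact hvr (mem_range'.2 ⟨z, hzρ, hvz⟩)
    · exact hf z hzρ hzx hvz
  · have hzρ' : z ∈ ρ'.dom := hdom ▸ hθ'.1.1 hz
    obtain ⟨w, hw, hzw⟩ := hρ'.2.1 z hzρ' hzρ
    rw [hzw] at hvz
    have hvw : v = w := by simpa [FOTerm.vars] using hvz
    rcases hfresh with ⟨hxρ, hvr⟩ | ⟨hxρ, hxv, _⟩
    · -- injectivity of ρ' on dom ρ' \ dom ρ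
      have hxρ' : x ∈ ρ'.dom := hdom ▸ hxθ'
      have : x = z := hρ'.2.2 (by simp [hxρ', hxρ]) (by simp [hzρ', hzρ])
        (by rw [hv0, hzw, hvw])
      exact hzx this.symm
    · exact hw (hvw ▸ mem_range'.2 ⟨x, hxρ, by simp [hxv, FOTerm.vars]⟩)

theorem kernel_eq_K0 (σ : FinSubst L) : σ.kernel = K0 σ := by
  have hK0 : Equiv (σ.restrict (K0 σ)) σ := by
    have := le_le_of_regExt (regExt_restrict_K0 σ)
    exact ⟨this.1, this.2⟩
  apply subset_antisymm
  · exact Set.sInter_subset_of_mem hK0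
  · intro x hx
    refine Set.mem_sInter.2 fun X hX => ?_
    by_contra hxX
    have hxρ : x ∉ (σ.restrict X).dom := fun h => hxX (mem_restrict_dom.1 h).2
    exact hx.2 (droppable_of_le hX.1 hx.1 (Or.inl hxρ))

end FinSubst

end KernelAux

/-- Properties of kernels of substitutions:
(1) `σ` is a regular extension of `σ↾Kernel(σ)` (in particular they are
equivalent); (2) if `σ ≼ θ` then `Kernel(σ) ⊇ Kernel(θ)`;
(3) if `σ ≈ θ` then `Kernel(σ) = Kernel(θ)`. -/
theorem kernel_properties {L : FOLang} (hc : L.HasConst)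
    (σ θ : FinSubst L) :
    (FinSubst.RegExt σ (σ.restrict σ.kernel) ∧
      FinSubst.Equiv (σ.restrict σ.kernel) σ) ∧
    (FinSubst.Le σ θ → θ.kernel ⊆ σ.kernel) ∧
    (FinSubst.Equiv σ θ → σ.kernel = θ.kernel) := by
  have h2 : ∀ σ θ : FinSubst L, FinSubst.Le σ θ → θ.kernel ⊆ σ.kernel := by
    intro σ θ h x hx
    rw [FinSubst.kernel_eq_K0] at hx ⊢
    by_contra hc'
    have hor : x ∉ σ.dom ∨ FinSubst.Droppable σ x := by
      by_cases hd : x ∈ σ.dom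
      · right; by_contra hD; exact hc' ⟨hd, hD⟩
      · left; exact hd
    exact hx.2 (FinSubst.droppable_of_le h hx.1 hor)
  have hreg : FinSubst.RegExt σ (σ.restrict σ.kernel) := by
    rw [FinSubst.kernel_eq_K0]
    exact FinSubst.regExt_restrict_K0 σ
  have heq := FinSubst.le_le_of_regExt hreg
  exact ⟨⟨hreg, heq.1, heq.2⟩, h2 σ θ,
    fun h => subset_antisymm (h2 θ σ h.2) (h2 σ θ h.1)⟩
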